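/- Euler–Lagrange computation for holomorphic energy: if h satisfies h_{z\bar z} + (ψ_u∘h)h_z h_{\bar z} = 0 on a compact quotient, then for any smooth variation the first variation of the energy density integral reduces to the boundary-free term: L_μ E(h) = −∫ e^{ψ∘h} h_z \bar h_{\bar z} \dot f_{\bar z} d²z = −∫ Φ(h) μ d²z, i.e., (pointwise after integration by parts) the terms involving \dot h and \dot{\bar h} cancel exactly by the harmonic map equation. -/

import Mathlib

open Complex ComplexConjugate

/-- Wirtinger derivative ∂/∂z. -/
noncomputable def wd (f : ℂ → ℂ) (z : ℂ) : ℂ :=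
  (1/2 : ℂ) * (fderiv ℝ f z 1 - Complex.I * fderiv ℝ f z Complex.I)

/-- Wirtinger derivative ∂/∂z̄. -/
noncomputable def wdb (f : ℂ → ℂ) (z : ℂ) : ℂ :=
  (1/2 : ℂ) * (fderiv ℝ f z 1 + Complex.I * fderiv ℝ f z Complex.I)
open MeasureTheory

lemma fderiv_apply_eq (f : ℂ → ℂ) (z v : ℂ) :
    fderiv ℝ f z v = wd f z * v + wdb f z * conj v := by
  obtain ⟨x, y, rfl⟩ : ∃ x y : ℝ, v = x + y * Complex.I :=
    ⟨v.re, v.im, (Complex.re_add_im v).symm⟩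
  have hv : (x : ℂ) + y * Complex.I = x • (1:ℂ) + y • Complex.I := by
    simp [Complex.real_smul]
  rw [hv, map_add, _root_.map_smul, _root_.map_smul]
  have hc : conj (x • (1:ℂ) + y • Complex.I) = (x:ℂ) - y * Complex.I := by
    simp [Complex.real_smul, Complex.conj_I]
    ring
  rw [hc]
  simp only [wd, wdb, Complex.real_smul]
  ring_nf
  rw [Complex.I_sq]
  ring

lemma conj_half_add (A B : ℂ) :
    conj ((1/2 : ℂ) * (A + Complex.I * B)) = (1/2 : ℂ) * (conj A - Complex.I * conj B) := by
  simp only [map_mul, map_add, map_div₀, map_one, map_ofNat, Complex.conj_I]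
  ring

lemma conj_half_sub (A B : ℂ) :
    conj ((1/2 : ℂ) * (A - Complex.I * B)) = (1/2 : ℂ) * (conj A + Complex.I * conj B) := by
  simp only [map_mul, map_sub, map_div₀, map_one, map_ofNat, Complex.conj_I]
  ring

lemma wd_eq (f : ℂ → ℂ) (z : ℂ) :
    wd f z = (1/2 : ℂ) * (fderiv ℝ f z 1 - Complex.I * fderiv ℝ f z Complex.I) := rfl

lemma wdb_eq (f : ℂ → ℂ) (z : ℂ) :
    wdb f z = (1/2 : ℂ) * (fderiv ℝ f z 1 + Complex.I * fderiv ℝ f z Complex.I) := rfl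

lemma wd_mul {f g : ℂ → ℂ} {z : ℂ} (hf : DifferentiableAt ℝ f z) (hg : DifferentiableAt ℝ g z) :
    wd (fun w => f w * g w) z = wd f z * g z + f z * wd g z := by
  simp only [wd, fderiv_fun_mul hf hg, ContinuousLinearMap.add_apply,
    ContinuousLinearMap.coe_smul', Pi.smul_apply, smul_eq_mul]
  ring

lemma wdb_mul {f g : ℂ → ℂ} {z : ℂ} (hf : DifferentiableAt ℝ f z) (hg : DifferentiableAt ℝ g z) :
    wdb (fun w => f w * g w) z = wdb f z * g z + f z * wdb g z := by
  simp only [wdb, fderiv_fun_mul hf hg, ContinuousLinearMap.add_apply,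
    ContinuousLinearMap.coe_smul', Pi.smul_apply, smul_eq_mul]
  ring

lemma wd_comp {g f : ℂ → ℂ} {z : ℂ} (hg : DifferentiableAt ℝ g (f z))
    (hf : DifferentiableAt ℝ f z) :
    wd (fun w => g (f w)) z = wd g (f z) * wd f z + wdb g (f z) * conj (wdb f z) := by
  have hcomp : fderiv ℝ (fun w => g (f w)) z = (fderiv ℝ g (f z)).comp (fderiv ℝ f z) :=
    fderiv_comp z hg hf
  rw [wd_eq (fun w => g (f w)), hcomp]
  simp only [ContinuousLinearMap.comp_apply]
  rw [fderiv_apply_eq g (f z), fderiv_apply_eq g (f z), wd_eq f, wdb_eq f, conj_half_add]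
  ring

lemma wdb_comp {g f : ℂ → ℂ} {z : ℂ} (hg : DifferentiableAt ℝ g (f z))
    (hf : DifferentiableAt ℝ f z) :
    wdb (fun w => g (f w)) z = wd g (f z) * wdb f z + wdb g (f z) * conj (wd f z) := by
  have hcomp : fderiv ℝ (fun w => g (f w)) z = (fderiv ℝ g (f z)).comp (fderiv ℝ f z) :=
    fderiv_comp z hg hf
  rw [wdb_eq (fun w => g (f w)), hcomp]
  simp only [ContinuousLinearMap.comp_apply]
  rw [fderiv_apply_eq g (f z), fderiv_apply_eq g (f z), wd_eq f, wdb_eq f, conj_half_sub]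
  ring

lemma fderiv_conj_comp (f : ℂ → ℂ) (z v : ℂ) :
    fderiv ℝ (fun w => conj (f w)) z v = conj (fderiv ℝ f z v) := by
  have : (fun w => conj (f w)) = (Complex.conjLIE : ℂ ≃ₗᵢ[ℝ] ℂ) ∘ f := rfl
  rw [this, LinearIsometryEquiv.comp_fderiv]
  rfl

lemma wd_conj (f : ℂ → ℂ) (z : ℂ) :
    wd (fun w => conj (f w)) z = conj (wdb f z) := by
  rw [wd, wdb, fderiv_conj_comp, fderiv_conj_comp, conj_half_add]

lemma wdb_conj (f : ℂ → ℂ) (z : ℂ) :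
    wdb (fun w => conj (f w)) z = conj (wd f z) := by
  rw [wdb, wd, fderiv_conj_comp, fderiv_conj_comp, conj_half_sub]

lemma fderiv_exp_real (w v : ℂ) : fderiv ℝ Complex.exp w v = v * Complex.exp w := by
  have h := ((Complex.hasDerivAt_exp w).hasFDerivAt.restrictScalars ℝ).fderiv
  rw [h]
  simp [smul_eq_mul]

lemma wd_exp (w : ℂ) : wd Complex.exp w = Complex.exp w := by
  simp only [wd, fderiv_exp_real]
  ring_nf
  rw [Complex.I_sq]
  ring

lemma wdb_exp (w : ℂ) : wdb Complex.exp w = 0 := by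
  simp only [wdb, fderiv_exp_real]
  ring_nf
  rw [Complex.I_sq]
  ring

lemma contDiff_wd {f : ℂ → ℂ} (hf : ContDiff ℝ (⊤ : ℕ∞) f) : ContDiff ℝ (⊤ : ℕ∞) (wd f) := by
  have h1 : ContDiff ℝ (⊤ : ℕ∞) (fderiv ℝ f) := hf.fderiv_right (by simp)
  exact contDiff_const.mul ((h1.clm_apply contDiff_const).sub
    (contDiff_const.mul (h1.clm_apply contDiff_const)))

lemma contDiff_wdb {f : ℂ → ℂ} (hf : ContDiff ℝ (⊤ : ℕ∞) f) : ContDiff ℝ (⊤ : ℕ∞) (wdb f) := by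
  have h1 : ContDiff ℝ (⊤ : ℕ∞) (fderiv ℝ f) := hf.fderiv_right (by simp)
  exact contDiff_const.mul ((h1.clm_apply contDiff_const).add
    (contDiff_const.mul (h1.clm_apply contDiff_const)))

lemma contDiff_conj {f : ℂ → ℂ} (hf : ContDiff ℝ (⊤ : ℕ∞) f) :
    ContDiff ℝ (⊤ : ℕ∞) (fun w => conj (f w)) :=
  Complex.conjLIE.toContinuousLinearEquiv.contDiff.comp hf

lemma integral_fderiv_real_eq_zero (g : ℂ → ℝ) (hg : ContDiff ℝ (⊤ : ℕ∞) g)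
    (hgc : HasCompactSupport g) (v : ℂ) :
    ∫ z : ℂ, fderiv ℝ g z v = 0 := by
  obtain ⟨C, hC⟩ := ContDiff.lipschitzWith_of_hasCompactSupport hgc hg (by simp)
  have key := LipschitzWith.integral_lineDeriv_mul_eq (μ := volume)
    (LipschitzWith.const' (K := 0) (1 : ℝ)) hC hgc (-v)
  have hconst : ∀ x : ℂ, lineDeriv ℝ (fun _ : ℂ => (1:ℝ)) x (-v) = 0 := fun x => by
    simp [lineDeriv]
  simp only [hconst, zero_mul, integral_zero, neg_neg, mul_one] at key
  have heq : ∀ z : ℂ, lineDeriv ℝ g z v = fderiv ℝ g z v := fun z =>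
    ((hg.differentiable (by simp)) z).lineDeriv_eq_fderiv
  calc ∫ z : ℂ, fderiv ℝ g z v = ∫ z : ℂ, lineDeriv ℝ g z v :=
        integral_congr_ae (Filter.Eventually.of_forall fun z => (heq z).symm)
    _ = 0 := key.symm

lemma integrable_fderiv_apply {F : Type*} [NormedAddCommGroup F] [NormedSpace ℝ F]
    (g : ℂ → F) (hg : ContDiff ℝ (⊤ : ℕ∞) g) (hgc : HasCompactSupport g) (v : ℂ) :
    Integrable (fun z : ℂ => fderiv ℝ g z v) := by
  apply Continuous.integrable_of_hasCompactSupport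
  · exact ((hg.fderiv_right (m := (⊤ : ℕ∞)) (by simp)).clm_apply contDiff_const).continuous
  · exact (hgc.fderiv ℝ).comp_left (g := fun L : ℂ →L[ℝ] F => L v) rfl

lemma integral_fderiv_complex_eq_zero (P : ℂ → ℂ) (hP : ContDiff ℝ (⊤ : ℕ∞) P)
    (hPc : HasCompactSupport P) (v : ℂ) :
    ∫ z : ℂ, fderiv ℝ P z v = 0 := by
  have hg1 : ContDiff ℝ (⊤ : ℕ∞) (fun w => (P w).re) := Complex.reCLM.contDiff.comp hP
  have hg2 : ContDiff ℝ (⊤ : ℕ∞) (fun w => (P w).im) := Complex.imCLM.contDiff.comp hP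
  have hg1c : HasCompactSupport (fun w => (P w).re) := hPc.comp_left (g := Complex.re) rfl
  have hg2c : HasCompactSupport (fun w => (P w).im) := hPc.comp_left (g := Complex.im) rfl
  have e1 : ∀ z : ℂ, fderiv ℝ (fun w => (P w).re) z v = (fderiv ℝ P z v).re := by
    intro z
    have hfd : fderiv ℝ (fun w => (P w).re) z = Complex.reCLM.comp (fderiv ℝ P z) :=
      (Complex.reCLM.hasFDerivAt.comp z (hP.differentiable (by simp) z).hasFDerivAt).fderiv
    rw [hfd]; rfl
  have e2 : ∀ z : ℂ, fderiv ℝ (fun w => (P w).im) z v = (fderiv ℝ P z v).im := by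
    intro z
    have hfd : fderiv ℝ (fun w => (P w).im) z = Complex.imCLM.comp (fderiv ℝ P z) :=
      (Complex.imCLM.hasFDerivAt.comp z (hP.differentiable (by simp) z).hasFDerivAt).fderiv
    rw [hfd]; rfl
  have hint : Integrable (fun z : ℂ => fderiv ℝ P z v) := integrable_fderiv_apply P hP hPc v
  have hre := integral_re (𝕜 := ℂ) hint
  have him := integral_im (𝕜 := ℂ) hint
  simp only [RCLike.re_to_complex, RCLike.im_to_complex] at hre him
  have h01 : (∫ z : ℂ, fderiv ℝ (fun w => (P w).re) z v) = 0 :=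
    integral_fderiv_real_eq_zero _ hg1 hg1c v
  have h02 : (∫ z : ℂ, fderiv ℝ (fun w => (P w).im) z v) = 0 :=
    integral_fderiv_real_eq_zero _ hg2 hg2c v
  rw [integral_congr_ae (Filter.Eventually.of_forall e1)] at h01
  rw [integral_congr_ae (Filter.Eventually.of_forall e2)] at h02
  apply Complex.ext
  · rw [← hre, h01]; rfl
  · rw [← him, h02]; rfl

lemma integral_wd_eq_zero (P : ℂ → ℂ) (hP : ContDiff ℝ (⊤ : ℕ∞) P) (hPc : HasCompactSupport P) :
    ∫ z : ℂ, wd P z = 0 := by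
  have i1 := integrable_fderiv_apply P hP hPc 1
  have i2 := integrable_fderiv_apply P hP hPc Complex.I
  simp only [wd]
  rw [integral_const_mul, integral_sub i1 (i2.const_mul Complex.I), integral_const_mul,
    integral_fderiv_complex_eq_zero P hP hPc 1, integral_fderiv_complex_eq_zero P hP hPc Complex.I]
  simp

lemma integral_wdb_eq_zero (P : ℂ → ℂ) (hP : ContDiff ℝ (⊤ : ℕ∞) P) (hPc : HasCompactSupport P) :
    ∫ z : ℂ, wdb P z = 0 := by
  have i1 := integrable_fderiv_apply P hP hPc 1
  have i2 := integrable_fderiv_apply P hP hPc Complex.I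
  simp only [wdb]
  rw [integral_const_mul, integral_add i1 (i2.const_mul Complex.I), integral_const_mul,
    integral_fderiv_complex_eq_zero P hP hPc 1, integral_fderiv_complex_eq_zero P hP hPc Complex.I]
  simp

lemma pointwise_identity (h doth dotf : ℂ → ℂ) (ψ : ℂ → ℝ)
    (hh : ContDiff ℝ (⊤ : ℕ∞) h) (hψ : ContDiff ℝ (⊤ : ℕ∞) ψ)
    (hdoth : ContDiff ℝ (⊤ : ℕ∞) doth) (hdotf : ContDiff ℝ (⊤ : ℕ∞) dotf) (z : ℂ)
    (harm : wdb (wd h) z + wd (fun u => (ψ u : ℂ)) (h z) * wd h z * wdb h z = 0) :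
    (Complex.exp (ψ (h z)) *
          (wd (fun u => (ψ u : ℂ)) (h z) * wd h z * conj (wd h z)
              * (doth z + wd h z * dotf z)
            + wd (fun w => doth w + wd h w * dotf w) z * conj (wd h z))
        + Complex.exp (ψ (h z)) *
          (wdb (fun u => (ψ u : ℂ)) (h z) * wd h z * conj (wd h z)
              * (conj (doth z) + conj (wdb h z) * dotf z)
            + wd h z * wdb (fun w => conj (doth w) + conj (wdb h w) * dotf w) z))
      = wd (fun w => Complex.exp (ψ (h w)) *
            ((doth w + wd h w * dotf w) * conj (wd h w))) z
        + wdb (fun w => Complex.exp (ψ (h w)) *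
            (wd h w * (conj (doth w) + conj (wdb h w) * dotf w))) z := by
  have hgψ : ContDiff ℝ (⊤ : ℕ∞) (fun u : ℂ => ((ψ u : ℝ) : ℂ)) := Complex.ofRealCLM.contDiff.comp hψ
  have hF : ContDiff ℝ (⊤ : ℕ∞) (fun w : ℂ => ((ψ (h w) : ℝ) : ℂ)) := hgψ.comp hh
  have hE : ContDiff ℝ (⊤ : ℕ∞) (fun w : ℂ => Complex.exp ((ψ (h w) : ℂ))) :=
    ((Complex.contDiff_exp (𝕜 := ℂ)).restrict_scalars ℝ).comp hF
  have hwdh : ContDiff ℝ (⊤ : ℕ∞) (wd h) := contDiff_wd hh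
  have hwdbh : ContDiff ℝ (⊤ : ℕ∞) (wdb h) := contDiff_wdb hh
  have hK : ContDiff ℝ (⊤ : ℕ∞) (fun w => conj (wd h w)) := contDiff_conj hwdh
  have hV : ContDiff ℝ (⊤ : ℕ∞) (fun w => doth w + wd h w * dotf w) := hdoth.add (hwdh.mul hdotf)
  have hW : ContDiff ℝ (⊤ : ℕ∞) (fun w => conj (doth w) + conj (wdb h w) * dotf w) :=
    (contDiff_conj hdoth).add ((contDiff_conj hwdbh).mul hdotf)
  have dE : DifferentiableAt ℝ (fun w : ℂ => Complex.exp ((ψ (h w) : ℂ))) z :=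
    hE.differentiable (by simp) z
  have dV : DifferentiableAt ℝ (fun w => doth w + wd h w * dotf w) z :=
    hV.differentiable (by simp) z
  have dK : DifferentiableAt ℝ (fun w => conj (wd h w)) z := hK.differentiable (by simp) z
  have dVK : DifferentiableAt ℝ (fun w => (doth w + wd h w * dotf w) * conj (wd h w)) z :=
    (hV.mul hK).differentiable (by simp) z
  have dW : DifferentiableAt ℝ (fun w => conj (doth w) + conj (wdb h w) * dotf w) z :=
    hW.differentiable (by simp) z
  have dwdh : DifferentiableAt ℝ (wd h) z := hwdh.differentiable (by simp) z
  have dhW : DifferentiableAt ℝ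
      (fun w => wd h w * (conj (doth w) + conj (wdb h w) * dotf w)) z :=
    (hwdh.mul hW).differentiable (by simp) z
  have dgψ : DifferentiableAt ℝ (fun u : ℂ => ((ψ u : ℝ) : ℂ)) (h z) :=
    hgψ.differentiable (by simp) (h z)
  have dh : DifferentiableAt ℝ h z := hh.differentiable (by simp) z
  have dexp : DifferentiableAt ℝ Complex.exp ((ψ (h z) : ℂ)) :=
    ((Complex.differentiable_exp (𝕜 := ℂ)).restrictScalars ℝ) _
  have dF : DifferentiableAt ℝ (fun w : ℂ => ((ψ (h w) : ℝ) : ℂ)) z :=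
    hF.differentiable (by simp) z
  -- derivative computations
  have eF : wd (fun w : ℂ => ((ψ (h w) : ℝ) : ℂ)) z
      = wd (fun u => (ψ u : ℂ)) (h z) * wd h z
        + wdb (fun u => (ψ u : ℂ)) (h z) * conj (wdb h z) := wd_comp dgψ dh
  have eFb : wdb (fun w : ℂ => ((ψ (h w) : ℝ) : ℂ)) z
      = wd (fun u => (ψ u : ℂ)) (h z) * wdb h z
        + wdb (fun u => (ψ u : ℂ)) (h z) * conj (wd h z) := wdb_comp dgψ dh
  have eE : wd (fun w : ℂ => Complex.exp ((ψ (h w) : ℂ))) z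
      = Complex.exp ((ψ (h z) : ℂ)) * wd (fun w : ℂ => ((ψ (h w) : ℝ) : ℂ)) z := by
    have := wd_comp (g := Complex.exp) (f := fun w : ℂ => ((ψ (h w) : ℝ) : ℂ)) dexp dF
    rw [wd_exp, wdb_exp] at this
    simpa using this
  have eEb : wdb (fun w : ℂ => Complex.exp ((ψ (h w) : ℂ))) z
      = Complex.exp ((ψ (h z) : ℂ)) * wdb (fun w : ℂ => ((ψ (h w) : ℝ) : ℂ)) z := by
    have := wdb_comp (g := Complex.exp) (f := fun w : ℂ => ((ψ (h w) : ℝ) : ℂ)) dexp dF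
    rw [wd_exp, wdb_exp] at this
    simpa using this
  have r1 : wd (fun w => Complex.exp ((ψ (h w) : ℂ)) *
        ((doth w + wd h w * dotf w) * conj (wd h w))) z
      = wd (fun w : ℂ => Complex.exp ((ψ (h w) : ℂ))) z
          * ((doth z + wd h z * dotf z) * conj (wd h z))
        + Complex.exp ((ψ (h z) : ℂ)) *
          wd (fun w => (doth w + wd h w * dotf w) * conj (wd h w)) z := wd_mul dE dVK
  have r2 : wd (fun w => (doth w + wd h w * dotf w) * conj (wd h w)) z
      = wd (fun w => doth w + wd h w * dotf w) z * conj (wd h z)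
        + (doth z + wd h z * dotf z) * wd (fun w => conj (wd h w)) z := wd_mul dV dK
  have r3 : wd (fun w => conj (wd h w)) z = conj (wdb (wd h) z) := wd_conj _ z
  have s1 : wdb (fun w => Complex.exp ((ψ (h w) : ℂ)) *
        (wd h w * (conj (doth w) + conj (wdb h w) * dotf w))) z
      = wdb (fun w : ℂ => Complex.exp ((ψ (h w) : ℂ))) z
          * (wd h z * (conj (doth z) + conj (wdb h z) * dotf z))
        + Complex.exp ((ψ (h z) : ℂ)) *
          wdb (fun w => wd h w * (conj (doth w) + conj (wdb h w) * dotf w)) z := wdb_mul dE dhW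
  have s2 : wdb (fun w => wd h w * (conj (doth w) + conj (wdb h w) * dotf w)) z
      = wdb (wd h) z * (conj (doth z) + conj (wdb h z) * dotf z)
        + wd h z * wdb (fun w => conj (doth w) + conj (wdb h w) * dotf w) z := wdb_mul dwdh dW
  have hm : wdb (wd h) z = -(wd (fun u => (ψ u : ℂ)) (h z) * wd h z * wdb h z) :=
    eq_neg_of_add_eq_zero_left harm
  have hb : wdb (fun u => (ψ u : ℂ)) (h z) = conj (wd (fun u => (ψ u : ℂ)) (h z)) := by
    have hgconj : (fun u : ℂ => ((ψ u : ℝ) : ℂ)) = fun u : ℂ => conj (((ψ u : ℝ)) : ℂ) := by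
      funext u; rw [Complex.conj_ofReal]
    conv_lhs => rw [hgconj]
    exact wdb_conj _ _
  rw [r1, r2, r3, s1, s2, eE, eEb, eF, eFb, hm, hb]
  simp only [map_neg, map_mul, map_add]
  ring

lemma wd_eq_zero_of_nmem (f : ℂ → ℂ) (z : ℂ) (hz : z ∉ tsupport f) : wd f z = 0 := by
  have h0 : fderiv ℝ f z = 0 :=
    Function.notMem_support.mp (fun hmem => hz (support_fderiv_subset ℝ hmem))
  simp [wd, h0]

lemma wdb_eq_zero_of_nmem (f : ℂ → ℂ) (z : ℂ) (hz : z ∉ tsupport f) : wdb f z = 0 := by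
  have h0 : fderiv ℝ f z = 0 :=
    Function.notMem_support.mp (fun hmem => hz (support_fderiv_subset ℝ hmem))
  simp [wdb, h0]

lemma hasCompactSupport_wd {f : ℂ → ℂ} (hf : HasCompactSupport f) :
    HasCompactSupport (wd f) := by
  apply hf.mono'
  intro z hz
  by_contra hzt
  exact hz (wd_eq_zero_of_nmem f z hzt)

lemma hasCompactSupport_wdb {f : ℂ → ℂ} (hf : HasCompactSupport f) :
    HasCompactSupport (wdb f) := by
  apply hf.mono'
  intro z hz
  by_contra hzt
  exact hz (wdb_eq_zero_of_nmem f z hzt)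

/-- local version: for a harmonic map `h` and smooth compactly
supported variations `(ḣ, ḟ)` in `U`, the first variation of the holomorphic
energy density integrates to the boundary-free term: all the `ḣ`, `conj ḣ` terms
cancel by integration by parts and the harmonic map equation, leaving
`L_μ E(h) = −∫ e^{ψ∘h} h_z conj(h_z̄) ḟ_z̄` (= `−∫ Φ(h) μ`).
Here `V = ḣ + h_z ḟ` and `W = conj ḣ + conj(h_z̄) ḟ`. -/
theorem energy_first_variation
    (U : Set ℂ) (hU : IsOpen U) (h doth dotf : ℂ → ℂ) (ψ : ℂ → ℝ)
    (hh : ContDiff ℝ (⊤ : ℕ∞) h) (hψ : ContDiff ℝ (⊤ : ℕ∞) ψ)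
    (hdoth : ContDiff ℝ (⊤ : ℕ∞) doth) (hdotf : ContDiff ℝ (⊤ : ℕ∞) dotf)
    (harm : ∀ z ∈ U,
      wdb (wd h) z + wd (fun u => (ψ u : ℂ)) (h z) * wd h z * wdb h z = 0)
    (hsupp1 : HasCompactSupport doth) (hsupp1' : tsupport doth ⊆ U)
    (hsupp2 : HasCompactSupport dotf) (hsupp2' : tsupport dotf ⊆ U) :
    (∫ z in U,
      (Complex.exp (ψ (h z)) *
          (wd (fun u => (ψ u : ℂ)) (h z) * wd h z * conj (wd h z)
              * (doth z + wd h z * dotf z)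
            + wd (fun w => doth w + wd h w * dotf w) z * conj (wd h z))
        + Complex.exp (ψ (h z)) *
          (wdb (fun u => (ψ u : ℂ)) (h z) * wd h z * conj (wd h z)
              * (conj (doth z) + conj (wdb h z) * dotf z)
            + wd h z * wdb (fun w => conj (doth w) + conj (wdb h w) * dotf w) z)
        - Complex.exp (ψ (h z)) * wd h z * conj (wdb h z) * wdb dotf z))
      = -∫ z in U, Complex.exp (ψ (h z)) * wd h z * conj (wdb h z) * wdb dotf z := by
  -- abbreviations
  set P : ℂ → ℂ := fun w => Complex.exp ((ψ (h w) : ℂ)) *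
      ((doth w + wd h w * dotf w) * conj (wd h w)) with hPdef
  set Q : ℂ → ℂ := fun w => Complex.exp ((ψ (h w) : ℂ)) *
      (wd h w * (conj (doth w) + conj (wdb h w) * dotf w)) with hQdef
  -- smoothness
  have hgψ : ContDiff ℝ (⊤ : ℕ∞) (fun u : ℂ => ((ψ u : ℝ) : ℂ)) := Complex.ofRealCLM.contDiff.comp hψ
  have hE : ContDiff ℝ (⊤ : ℕ∞) (fun w : ℂ => Complex.exp ((ψ (h w) : ℂ))) :=
    ((Complex.contDiff_exp (𝕜 := ℂ)).restrict_scalars ℝ).comp (hgψ.comp hh)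
  have hwdh : ContDiff ℝ (⊤ : ℕ∞) (wd h) := contDiff_wd hh
  have hwdbh : ContDiff ℝ (⊤ : ℕ∞) (wdb h) := contDiff_wdb hh
  have hP : ContDiff ℝ (⊤ : ℕ∞) P :=
    hE.mul ((hdoth.add (hwdh.mul hdotf)).mul (contDiff_conj hwdh))
  have hQ : ContDiff ℝ (⊤ : ℕ∞) Q :=
    hE.mul (hwdh.mul ((contDiff_conj hdoth).add ((contDiff_conj hwdbh).mul hdotf)))
  -- compact supports
  have hPsupp : Function.support P ⊆ tsupport doth ∪ tsupport dotf := by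
    intro z hz
    by_contra hmem
    simp only [Set.mem_union, not_or] at hmem
    have h1 : doth z = 0 := image_eq_zero_of_notMem_tsupport hmem.1
    have h2 : dotf z = 0 := image_eq_zero_of_notMem_tsupport hmem.2
    exact hz (by simp [hPdef, h1, h2])
  have hQsupp : Function.support Q ⊆ tsupport doth ∪ tsupport dotf := by
    intro z hz
    by_contra hmem
    simp only [Set.mem_union, not_or] at hmem
    have h1 : doth z = 0 := image_eq_zero_of_notMem_tsupport hmem.1
    have h2 : dotf z = 0 := image_eq_zero_of_notMem_tsupport hmem.2
    exact hz (by simp [hQdef, h1, h2])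
  have hKc : IsCompact (tsupport doth ∪ tsupport dotf) := hsupp1.union hsupp2
  have hUsub : tsupport doth ∪ tsupport dotf ⊆ U := Set.union_subset hsupp1' hsupp2'
  have hPc : HasCompactSupport P := HasCompactSupport.of_support_subset_isCompact hKc hPsupp
  have hQc : HasCompactSupport Q := HasCompactSupport.of_support_subset_isCompact hKc hQsupp
  have hPU : tsupport P ⊆ U :=
    (closure_minimal hPsupp (hKc.isClosed)).trans hUsub
  have hQU : tsupport Q ⊆ U :=
    (closure_minimal hQsupp (hKc.isClosed)).trans hUsub
  -- the C-term
  set Cf : ℂ → ℂ := fun z => Complex.exp ((ψ (h z) : ℂ)) * wd h z * conj (wdb h z) * wdb dotf z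
    with hCdef
  have hCcont : Continuous Cf := by
    have : ContDiff ℝ (⊤ : ℕ∞) Cf :=
      ((hE.mul hwdh).mul (contDiff_conj hwdbh)).mul (contDiff_wdb hdotf)
    exact this.continuous
  have hCc : HasCompactSupport Cf := by
    apply hsupp2.mono'
    intro z hz
    by_contra hzt
    exact hz (by simp [hCdef, wdb_eq_zero_of_nmem dotf z hzt])
  have iC : Integrable Cf := hCcont.integrable_of_hasCompactSupport hCc
  -- the divergence term
  have iPQ : Integrable (fun z => wd P z + wdb Q z) := by
    apply Integrable.add
    · exact (contDiff_wd hP).continuous.integrable_of_hasCompactSupport (hasCompactSupport_wd hPc)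
    · exact (contDiff_wdb hQ).continuous.integrable_of_hasCompactSupport
        (hasCompactSupport_wdb hQc)
  -- pointwise identity on U
  have key : ∀ z ∈ U,
      (Complex.exp (ψ (h z)) *
          (wd (fun u => (ψ u : ℂ)) (h z) * wd h z * conj (wd h z)
              * (doth z + wd h z * dotf z)
            + wd (fun w => doth w + wd h w * dotf w) z * conj (wd h z))
        + Complex.exp (ψ (h z)) *
          (wdb (fun u => (ψ u : ℂ)) (h z) * wd h z * conj (wd h z)
              * (conj (doth z) + conj (wdb h z) * dotf z)
            + wd h z * wdb (fun w => conj (doth w) + conj (wdb h w) * dotf w) z)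
        - Complex.exp (ψ (h z)) * wd h z * conj (wdb h z) * wdb dotf z)
      = (wd P z + wdb Q z) - Cf z := by
    intro z hz
    have := pointwise_identity h doth dotf ψ hh hψ hdoth hdotf z (harm z hz)
    rw [hCdef]
    simp only [hPdef, hQdef]
    rw [← this]
  rw [MeasureTheory.setIntegral_congr_fun hU.measurableSet key]
  rw [MeasureTheory.integral_sub (iPQ.integrableOn) (iC.integrableOn)]
  have hzero : (∫ z in U, (wd P z + wdb Q z)) = 0 := by
    rw [MeasureTheory.setIntegral_eq_integral_of_forall_compl_eq_zero (fun z hz => ?_)]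
    · rw [MeasureTheory.integral_add
        ((contDiff_wd hP).continuous.integrable_of_hasCompactSupport (hasCompactSupport_wd hPc))
        ((contDiff_wdb hQ).continuous.integrable_of_hasCompactSupport
          (hasCompactSupport_wdb hQc)),
        integral_wd_eq_zero P hP hPc, integral_wdb_eq_zero Q hQ hQc, add_zero]
    · rw [wd_eq_zero_of_nmem P z (fun hm => hz (hPU hm)),
        wdb_eq_zero_of_nmem Q z (fun hm => hz (hQU hm)), add_zero]
  rw [hzero, zero_sub]
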